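/- arXiv:2302.09694 — 2 statements merged into one kernel-verified Lean document; each statement's English description precedes it below -/
import Mathlib

section
/- Fix t ∈ {0,1} and m ∈ 𝕄. Assume: (positivity) P(T=t, M=m, Z_TY=v, Z_MY=s) > 0 for all v ∈ V, s ∈ S with P(Z_TY=v, Z_MY=s) > 0; and (conditional ignorability of the outcome) for all v, s with P(Z_TY=v, Z_MY=s) > 0, E[Y(t,m)·1{T=t, M=m} | Z_TY=v, Z_MY=s] = E[Y(t,m) | Z_TY=v, Z_MY=s] · P(T=t, M=m | Z_TY=v, Z_MY=s). Then for every s with P(Z_MY=s) > 0: E[Y(t,m) | Z_MY=s] = ∑_{v : P(Z_TY=v, Z_MY=s)>0} E[Y | T=t, M=m, Z_TY=v, Z_MY=s] · P(Z_TY=v | Z_MY=s). (Back-door adjustment of the {T,M}→Y relationship by Z_TY.) -/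
/-!
On each stratum `{Z_TY = v, Z_MY = s}` of positive probability, ignorability says that `Y(t,m)` is
uncorrelated with the event `{T = t, M = m}`, so conditioning further on that event (which has
positive probability) leaves the mean of `Y(t,m)` unchanged; on it, `Y = Y(t,m)` by consistency.
Weighting the stratum means by `P(Z_TY = v | Z_MY = s)` and summing is the law of total
expectation, to which null strata contribute nothing.
-/

open Finset
open scoped Classical

/-- Probability of an event `A` under the finite distribution `p`. -/
noncomputable def Pr {Ω : Type*} [Fintype Ω] (p : Ω → ℝ) (A : Ω → Prop) : ℝ :=
  ∑ ω, if A ω then p ω else 0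

/-- Expectation of a random variable `V` under the finite distribution `p`. -/
noncomputable def Ex {Ω : Type*} [Fintype Ω] (p : Ω → ℝ) (V : Ω → ℝ) : ℝ :=
  ∑ ω, p ω * V ω

/-- Conditional probability `P(A | B) = P(A ∩ B) / P(B)`. -/
noncomputable def PrCond {Ω : Type*} [Fintype Ω] (p : Ω → ℝ) (A B : Ω → Prop) : ℝ :=
  Pr p (fun ω => A ω ∧ B ω) / Pr p B

/-- Conditional expectation `E[V | B] = E[V·1_B] / P(B)`. -/
noncomputable def ExCond {Ω : Type*} [Fintype Ω] (p : Ω → ℝ) (V : Ω → ℝ) (B : Ω → Prop) : ℝ :=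
  Ex p (fun ω => V ω * (if B ω then 1 else 0)) / Pr p B

section FiniteProbability

variable {Ω : Type*} [Fintype Ω] {p : Ω → ℝ}

-- The classical instance is the one `ExCond` and `PrCond` produce when unfolded at a compound event.
local notation "𝟙[" A "]" => @ite ℝ A (Classical.propDecidable A) 1 0

lemma Pr_nonneg (hp : ∀ ω, 0 ≤ p ω) (A : Ω → Prop) : 0 ≤ Pr p A :=
  sum_nonneg fun ω _ => by split_ifs <;> simp [hp ω]

lemma Ex_mul_indicator_eq_zero_of_Pr_eq_zero (hp : ∀ ω, 0 ≤ p ω) {A : Ω → Prop}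
    (hA : Pr p A = 0) (f : Ω → ℝ) :
    Ex p (fun ω => f ω * 𝟙[A ω]) = 0 := by
  have hnull : ∀ ω, A ω → p ω = 0 := fun ω hω => by
    simpa [hω] using (sum_eq_zero_iff_of_nonneg fun ω _ => by
      split_ifs <;> simp [hp ω]).mp hA ω (mem_univ ω)
  refine sum_eq_zero fun ω _ => ?_
  by_cases hω : A ω <;> simp [hω, hnull]

lemma Ex_mul_indicator_mul_indicator (f : Ω → ℝ) (A B : Ω → Prop) [DecidablePred A] :
    Ex p (fun ω => (f ω * if A ω then 1 else 0) * 𝟙[B ω]) =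
      Ex p (fun ω => f ω * 𝟙[A ω ∧ B ω]) := by
  refine sum_congr rfl fun ω _ => ?_
  by_cases hA : A ω <;> by_cases hB : B ω <;> simp [hA, hB]

lemma Ex_mul_indicator_eq_sum_fiber {V : Type*} [Fintype V] (f : Ω → ℝ) (Z : Ω → V)
    (B : Ω → Prop) :
    Ex p (fun ω => f ω * 𝟙[B ω]) =
      ∑ v, Ex p (fun ω => f ω * 𝟙[Z ω = v ∧ B ω]) := by
  unfold Ex
  rw [sum_comm]
  refine sum_congr rfl fun ω _ => ?_
  by_cases hB : B ω <;> simp [hB, eq_comm]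

lemma ExCond_congr {f g : Ω → ℝ} {B B' : Ω → Prop} (hB : ∀ ω, B ω ↔ B' ω)
    (hfg : ∀ ω, B ω → f ω = g ω) : ExCond p f B = ExCond p g B' := by
  have hBB' : B = B' := funext fun ω => propext (hB ω)
  subst hBB'
  unfold ExCond Ex
  congr 1
  refine sum_congr rfl fun ω _ => ?_
  by_cases hω : B ω <;> simp [hω, hfg]

lemma ExCond_mul_PrCond {A B : Ω → Prop} (hAB : Pr p (fun ω => A ω ∧ B ω) ≠ 0)
    (f : Ω → ℝ) :
    ExCond p f (fun ω => A ω ∧ B ω) * PrCond p A B =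
      Ex p (fun ω => f ω * 𝟙[A ω ∧ B ω]) / Pr p B := by
  unfold ExCond PrCond
  field_simp

lemma ExCond_and_eq_of_uncorrelated {f : Ω → ℝ} {A B : Ω → Prop} [DecidablePred A] (hB : 0 < Pr p B)
    (hAB : 0 < Pr p (fun ω => A ω ∧ B ω))
    (huncorr : ExCond p (fun ω => f ω * if A ω then 1 else 0) B =
      ExCond p f B * PrCond p A B) :
    ExCond p f (fun ω => A ω ∧ B ω) = ExCond p f B := by
  unfold ExCond PrCond at *
  rw [Ex_mul_indicator_mul_indicator] at huncorr
  beta_reduce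
  rw [div_eq_iff hAB.ne', ← div_left_inj' hB.ne', huncorr]
  field_simp

lemma ExCond_eq_sum_ExCond_mul_PrCond {V : Type*} [Fintype V] (hp : ∀ ω, 0 ≤ p ω)
    (f : Ω → ℝ) (Z : Ω → V) {B : Ω → Prop} :
    ExCond p f B = ∑ v ∈ univ.filter (fun v => 0 < Pr p (fun ω => Z ω = v ∧ B ω)),
      ExCond p f (fun ω => Z ω = v ∧ B ω) * PrCond p (fun ω => Z ω = v) B := by
  have hnull : ∀ v ∈ univ, v ∉ univ.filter (fun v => 0 < Pr p (fun ω => Z ω = v ∧ B ω)) →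
      Ex p (fun ω => f ω * 𝟙[Z ω = v ∧ B ω]) = 0 := fun v _ hv => by
    have hv : Pr p (fun ω => Z ω = v ∧ B ω) ≤ 0 := by simpa using hv
    exact Ex_mul_indicator_eq_zero_of_Pr_eq_zero hp (hv.antisymm (Pr_nonneg hp _)) f
  rw [ExCond, Ex_mul_indicator_eq_sum_fiber f Z, ← sum_subset (filter_subset _ _) hnull,
    sum_div]
  exact sum_congr rfl fun v hv => (ExCond_mul_PrCond (mem_filter.mp hv).2.ne' f).symm

end FiniteProbability

theorem stmt5_general {Ω 𝕄 V S : Type*} [Fintype Ω] [Fintype V]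
    (p : Ω → ℝ) (hp : ∀ ω, 0 ≤ p ω)
    (T : Ω → Fin 2) (M : Fin 2 → Ω → 𝕄) (Y : Fin 2 → 𝕄 → Ω → ℝ)
    (ZTY : Ω → V) (ZMY : Ω → S) (t : Fin 2) (m : 𝕄)
    (hpos : ∀ (v : V) (s : S), 0 < Pr p (fun ω => ZTY ω = v ∧ ZMY ω = s) →
      0 < Pr p (fun ω => T ω = t ∧ M (T ω) ω = m ∧ ZTY ω = v ∧ ZMY ω = s))
    (hign : ∀ (v : V) (s : S), 0 < Pr p (fun ω => ZTY ω = v ∧ ZMY ω = s) →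
      ExCond p (fun ω => Y t m ω * (if T ω = t ∧ M (T ω) ω = m then 1 else 0))
          (fun ω => ZTY ω = v ∧ ZMY ω = s) =
        ExCond p (fun ω => Y t m ω) (fun ω => ZTY ω = v ∧ ZMY ω = s) *
          PrCond p (fun ω => T ω = t ∧ M (T ω) ω = m)
            (fun ω => ZTY ω = v ∧ ZMY ω = s)) :
    ∀ s : S, 0 < Pr p (fun ω => ZMY ω = s) →
      ExCond p (fun ω => Y t m ω) (fun ω => ZMY ω = s) =
        ∑ v ∈ Finset.univ.filter
            (fun v : V => 0 < Pr p (fun ω => ZTY ω = v ∧ ZMY ω = s)),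
          ExCond p (fun ω => Y (T ω) (M (T ω) ω) ω)
              (fun ω => T ω = t ∧ M (T ω) ω = m ∧ ZTY ω = v ∧ ZMY ω = s) *
            PrCond p (fun ω => ZTY ω = v) (fun ω => ZMY ω = s) := by
  intro s _
  rw [ExCond_eq_sum_ExCond_mul_PrCond hp _ ZTY]
  refine sum_congr rfl fun v hv => ?_
  have hvs := (mem_filter.mp hv).2
  have hcell := hpos v s hvs
  congr 1
  calc ExCond p (Y t m) (fun ω => ZTY ω = v ∧ ZMY ω = s)
      = ExCond p (Y t m)
          (fun ω => (T ω = t ∧ M (T ω) ω = m) ∧ ZTY ω = v ∧ ZMY ω = s) :=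
        (ExCond_and_eq_of_uncorrelated hvs (by simpa only [and_assoc] using hcell)
          (hign v s hvs)).symm
    _ = ExCond p (fun ω => Y (T ω) (M (T ω) ω) ω)
          (fun ω => T ω = t ∧ M (T ω) ω = m ∧ ZTY ω = v ∧ ZMY ω = s) :=
        ExCond_congr (fun _ => and_assoc) fun ω ⟨⟨hT, hM⟩, _⟩ => by subst hT; rw [hM]

/-- back-door adjustment of the `{T,M} → Y` relationship by `Z_TY`,
conditioning on `Z_MY`. Here the observed outcome is `Y (T ω) (M (T ω) ω) ω`. -/
theorem stmt5 {Ω 𝕄 U V S : Type*} [Fintype Ω] [Fintype 𝕄] [Fintype U] [Fintype V] [Fintype S]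
    (p : Ω → ℝ) (hp : ∀ ω, 0 ≤ p ω) (hp1 : ∑ ω, p ω = 1)
    (T : Ω → Fin 2) (M : Fin 2 → Ω → 𝕄) (Y : Fin 2 → 𝕄 → Ω → ℝ)
    (ZTM : Ω → U) (ZTY : Ω → V) (ZMY : Ω → S) (t : Fin 2) (m : 𝕄)
    (hpos : ∀ (v : V) (s : S), 0 < Pr p (fun ω => ZTY ω = v ∧ ZMY ω = s) →
      0 < Pr p (fun ω => T ω = t ∧ M (T ω) ω = m ∧ ZTY ω = v ∧ ZMY ω = s))
    (hign : ∀ (v : V) (s : S), 0 < Pr p (fun ω => ZTY ω = v ∧ ZMY ω = s) →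
      ExCond p (fun ω => Y t m ω * (if T ω = t ∧ M (T ω) ω = m then 1 else 0))
          (fun ω => ZTY ω = v ∧ ZMY ω = s) =
        ExCond p (fun ω => Y t m ω) (fun ω => ZTY ω = v ∧ ZMY ω = s) *
          PrCond p (fun ω => T ω = t ∧ M (T ω) ω = m)
            (fun ω => ZTY ω = v ∧ ZMY ω = s)) :
    ∀ s : S, 0 < Pr p (fun ω => ZMY ω = s) →
      ExCond p (fun ω => Y t m ω) (fun ω => ZMY ω = s) =
        ∑ v ∈ Finset.univ.filter
            (fun v : V => 0 < Pr p (fun ω => ZTY ω = v ∧ ZMY ω = s)),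
          ExCond p (fun ω => Y (T ω) (M (T ω) ω) ω)
              (fun ω => T ω = t ∧ M (T ω) ω = m ∧ ZTY ω = v ∧ ZMY ω = s) *
            PrCond p (fun ω => ZTY ω = v) (fun ω => ZMY ω = s) :=
  stmt5_general p hp T M Y ZTY ZMY t m hpos hign
end

section
/- Assume: (positivity) P(T=t, M=m, Z=z) > 0 for every t ∈ {0,1}, m ∈ 𝕄 and every z with P(Z=z) > 0; and (ii) mediator ignorability: for all t, t' ∈ {0,1}, m ∈ 𝕄, v ∈ V and u, s with P(Z_TM=u, Z_MY=s) > 0, P(M(t)=m, T=t', Z_TY=v | Z_TM=u, Z_MY=s) = P(M(t)=m | Z_TM=u, Z_MY=s) · P(T=t', Z_TY=v | Z_TM=u, Z_MY=s). Then for every t ∈ {0,1}, m ∈ 𝕄 and z = (u,v,s) with P(Z=z) > 0: P(M(t)=m | Z=z) = P(M=m | T=t, Z_TM=u, Z_MY=s). -/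
open Finset
open scoped Classical

/-! Write `B = {Z_TM = u, Z_MY = s}` and `c = P(M(t) = m | B)`. Mediator ignorability says that
`P({M(t) = m} ∩ F ∩ B) = c · P(F ∩ B)` for every cell `F = {T = t', Z_TY = v}` of the partition
generated by `(T, Z_TY)`, hence for every event determined by `(T, Z_TY)`. Taking `{Z_TY = v}`
gives `P(M(t) = m | Z = z) = c`; taking `{T = t}`, on which `M = M(t)`, gives
`P(M = m | T = t, B) = c`. Positivity makes both conditioning events non-null. -/

section Pr

variable {Ω : Type*} [Fintype Ω] (p : Ω → ℝ)

lemma Pr_congr {A B : Ω → Prop} (h : ∀ ω, A ω ↔ B ω) : Pr p A = Pr p B := by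
  simp only [Pr, h]

lemma Pr_mono (hp : ∀ ω, 0 ≤ p ω) {A B : Ω → Prop} (h : ∀ ω, A ω → B ω) :
    Pr p A ≤ Pr p B :=
  sum_le_sum fun ω _ => by
    by_cases hA : A ω
    · simp [hA, h ω hA]
    · by_cases hB : B ω <;> simp [hA, hB, hp ω]

lemma Pr_eq_sum_Pr_and_eq {α : Type*} [Fintype α] (f : Ω → α) (C : Ω → Prop) :
    Pr p C = ∑ a, Pr p (fun ω => C ω ∧ f ω = a) := by
  unfold Pr
  rw [sum_comm]
  refine sum_congr rfl fun ω _ => ?_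
  by_cases h : C ω <;> simp [h]

lemma Pr_and_comp_eq_mul_of_fibres {α : Type*} [Fintype α] (f : Ω → α) {A B : Ω → Prop} {c : ℝ}
    (h : ∀ a, Pr p (fun ω => A ω ∧ f ω = a) = c * Pr p (fun ω => B ω ∧ f ω = a))
    (E : α → Prop) :
    Pr p (fun ω => A ω ∧ E (f ω)) = c * Pr p (fun ω => B ω ∧ E (f ω)) := by
  rw [Pr_eq_sum_Pr_and_eq p f, Pr_eq_sum_Pr_and_eq p f (fun ω => B ω ∧ E (f ω)), mul_sum]
  refine sum_congr rfl fun a _ => ?_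
  by_cases hE : E a
  · have hfibre : ∀ D : Ω → Prop,
        Pr p (fun ω => (D ω ∧ E (f ω)) ∧ f ω = a) = Pr p (fun ω => D ω ∧ f ω = a) :=
      fun D => Pr_congr p fun ω =>
        ⟨fun ⟨⟨hD, _⟩, hf⟩ => ⟨hD, hf⟩, fun ⟨hD, hf⟩ => ⟨⟨hD, hf ▸ hE⟩, hf⟩⟩
    rw [hfibre, hfibre, h a]
  · have hzero : ∀ D : Ω → Prop, Pr p (fun ω => (D ω ∧ E (f ω)) ∧ f ω = a) = 0 :=
      fun D => sum_eq_zero fun ω _ => if_neg fun ⟨⟨_, hEω⟩, hf⟩ => hE (hf ▸ hEω)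
    rw [hzero, hzero, mul_zero]

lemma Pr_and_and_eq_of_PrCond_and_eq_mul {A E B : Ω → Prop} (hB : Pr p B ≠ 0)
    (h : PrCond p (fun ω => A ω ∧ E ω) B = PrCond p A B * PrCond p E B) :
    Pr p (fun ω => A ω ∧ E ω ∧ B ω) = PrCond p A B * Pr p (fun ω => E ω ∧ B ω) := by
  simp only [PrCond] at h ⊢
  rw [div_mul_div_comm, div_eq_div_iff hB (mul_ne_zero hB hB)] at h
  rw [Pr_congr p (B := fun ω => (A ω ∧ E ω) ∧ B ω) (fun ω => and_assoc.symm)]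
  field_simp
  exact mul_right_cancel₀ hB (by linarith)

lemma PrCond_eq_of_Pr_and_eq_mul {A B : Ω → Prop} {c : ℝ} (hB : Pr p B ≠ 0)
    (h : Pr p (fun ω => A ω ∧ B ω) = c * Pr p B) : PrCond p A B = c := by
  rw [PrCond, h, mul_div_cancel_right₀ _ hB]

end Pr

theorem stmt9_general {Ω 𝕄 U V S : Type*}
    [Fintype Ω] [Fintype 𝕄] [Fintype U] [Fintype V] [Fintype S]
    (p : Ω → ℝ) (hp : ∀ ω, 0 ≤ p ω)
    (T : Ω → Fin 2) (M : Fin 2 → Ω → 𝕄)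
    (ZTM : Ω → U) (ZTY : Ω → V) (ZMY : Ω → S)
    -- positivity
    (hpos : ∀ (t : Fin 2) (m : 𝕄) (z : U × V × S),
      0 < Pr p (fun ω => (ZTM ω, ZTY ω, ZMY ω) = z) →
      0 < Pr p (fun ω => T ω = t ∧ M (T ω) ω = m ∧ (ZTM ω, ZTY ω, ZMY ω) = z))
    -- (ii) mediator ignorability
    (hMed : ∀ (t t' : Fin 2) (m : 𝕄) (v : V) (u : U) (s : S),
      0 < Pr p (fun ω => ZTM ω = u ∧ ZMY ω = s) →
      PrCond p (fun ω => M t ω = m ∧ T ω = t' ∧ ZTY ω = v)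
          (fun ω => ZTM ω = u ∧ ZMY ω = s) =
        PrCond p (fun ω => M t ω = m) (fun ω => ZTM ω = u ∧ ZMY ω = s) *
          PrCond p (fun ω => T ω = t' ∧ ZTY ω = v) (fun ω => ZTM ω = u ∧ ZMY ω = s)) :
    ∀ (t : Fin 2) (m : 𝕄) (z : U × V × S),
      0 < Pr p (fun ω => (ZTM ω, ZTY ω, ZMY ω) = z) →
      PrCond p (fun ω => M t ω = m) (fun ω => (ZTM ω, ZTY ω, ZMY ω) = z) =
        PrCond p (fun ω => M (T ω) ω = m)
          (fun ω => T ω = t ∧ ZTM ω = z.1 ∧ ZMY ω = z.2.2) := by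
  rintro t m ⟨u, v, s⟩ hz
  set B : Ω → Prop := fun ω => ZTM ω = u ∧ ZMY ω = s
  set c := PrCond p (fun ω => M t ω = m) B
  have hB : 0 < Pr p B := hz.trans_le (Pr_mono p hp fun ω h => by simp_all [B])
  have hTB : 0 < Pr p (fun ω => T ω = t ∧ ZTM ω = u ∧ ZMY ω = s) :=
    (hpos t m _ hz).trans_le (Pr_mono p hp fun ω h => by simp_all)
  have hfibre : ∀ a : Fin 2 × V, Pr p (fun ω => (M t ω = m ∧ B ω) ∧ (T ω, ZTY ω) = a) =
      c * Pr p (fun ω => B ω ∧ (T ω, ZTY ω) = a) := fun ⟨t', v'⟩ => by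
    convert Pr_and_and_eq_of_PrCond_and_eq_mul p hB.ne' (hMed t t' m v' u s hB) using 3
    all_goals (try funext ω); grind
  have hZ : Pr p (fun ω => M t ω = m ∧ (ZTM ω, ZTY ω, ZMY ω) = (u, v, s)) =
      c * Pr p (fun ω => (ZTM ω, ZTY ω, ZMY ω) = (u, v, s)) := by
    convert Pr_and_comp_eq_mul_of_fibres p _ hfibre (fun a => a.2 = v) using 3
    all_goals (try funext ω); grind
  have hT : Pr p (fun ω => M (T ω) ω = m ∧ T ω = t ∧ ZTM ω = u ∧ ZMY ω = s) =
      c * Pr p (fun ω => T ω = t ∧ ZTM ω = u ∧ ZMY ω = s) := by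
    convert Pr_and_comp_eq_mul_of_fibres p _ hfibre (fun a => a.1 = t) using 3
    all_goals (try funext ω); grind
  rw [PrCond_eq_of_Pr_and_eq_mul p hz.ne' hZ, PrCond_eq_of_Pr_and_eq_mul p hTB.ne' hT]

/-- `P(M(t)=m | Z=z) = P(M=m | T=t, Z_TM=u, Z_MY=s)` under positivity
and mediator ignorability. -/
theorem stmt9 {Ω 𝕄 U V S : Type*}
    [Fintype Ω] [Fintype 𝕄] [Fintype U] [Fintype V] [Fintype S]
    (p : Ω → ℝ) (hp : ∀ ω, 0 ≤ p ω) (hp1 : ∑ ω, p ω = 1)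
    (T : Ω → Fin 2) (M : Fin 2 → Ω → 𝕄) (Y : Fin 2 → 𝕄 → Ω → ℝ)
    (ZTM : Ω → U) (ZTY : Ω → V) (ZMY : Ω → S)
    -- positivity
    (hpos : ∀ (t : Fin 2) (m : 𝕄) (z : U × V × S),
      0 < Pr p (fun ω => (ZTM ω, ZTY ω, ZMY ω) = z) →
      0 < Pr p (fun ω => T ω = t ∧ M (T ω) ω = m ∧ (ZTM ω, ZTY ω, ZMY ω) = z))
    -- (ii) mediator ignorability
    (hMed : ∀ (t t' : Fin 2) (m : 𝕄) (v : V) (u : U) (s : S),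
      0 < Pr p (fun ω => ZTM ω = u ∧ ZMY ω = s) →
      PrCond p (fun ω => M t ω = m ∧ T ω = t' ∧ ZTY ω = v)
          (fun ω => ZTM ω = u ∧ ZMY ω = s) =
        PrCond p (fun ω => M t ω = m) (fun ω => ZTM ω = u ∧ ZMY ω = s) *
          PrCond p (fun ω => T ω = t' ∧ ZTY ω = v) (fun ω => ZTM ω = u ∧ ZMY ω = s)) :
    ∀ (t : Fin 2) (m : 𝕄) (z : U × V × S),
      0 < Pr p (fun ω => (ZTM ω, ZTY ω, ZMY ω) = z) →
      PrCond p (fun ω => M t ω = m) (fun ω => (ZTM ω, ZTY ω, ZMY ω) = z) =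
        PrCond p (fun ω => M (T ω) ω = m)
          (fun ω => T ω = t ∧ ZTM ω = z.1 ∧ ZMY ω = z.2.2) :=
  stmt9_general p hp T M ZTM ZTY ZMY hpos hMed
end
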